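/- arXiv:2001.11668 — 2 statements merged into one kernel-verified Lean document; each statement's English description precedes it below -/
import Mathlib

section
/- Let ζ ≥ 0 and let (1+ζ)S_n = {(1+ζ)X : X ∈ S_n}. Let M be an n×n real symmetric matrix with eigendecomposition M = Σ_{i=1}^n λ_i v_i v_iᵀ (λ_1 ≥ ... ≥ λ_n, orthonormal v_i). Then the Euclidean projection of M onto (1+ζ)S_n equals Σ_{i=1}^n max{0, λ_i − σ} v_i v_iᵀ, where σ is the unique scalar satisfying Σ_{i=1}^n max{0, λ_i − σ} = 1 + ζ. -/
/-!
Write `M = Vᵀ diag(λ) V` with `V` orthogonal. Conjugation by `V` preserves the Frobenius inner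
product, and for `Z ⪰ 0` with `tr Z = c` the diagonal `w` of `V Z Vᵀ` lies in the simplex
`{w ≥ 0, ∑ w = c}`. So the obtuse-angle criterion `⟪M - P, P - Z⟫ ≥ 0` for
`P = Vᵀ diag(p) V`, `p = max(0, λ - σ)`, reduces to `∑ (λᵢ - pᵢ)(pᵢ - wᵢ) ≥ 0`. Since
`λᵢ - pᵢ = min(λᵢ, σ)` is at most `σ`, with equality wherever `pᵢ > 0`, each term is at least
`σ (pᵢ - wᵢ)`, and these sum to `σ (c - c) = 0`.
The level `σ` exists and is unique because `σ ↦ ∑ max(0, λᵢ - σ)` is continuous, vanishes for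
`σ ≥ max λ`, and is strictly decreasing wherever it is positive.
-/

open scoped BigOperators
open MeasureTheory
open scoped Matrix

namespace LRSGD

noncomputable def frobInner {n : ℕ} (A B : Matrix (Fin n) (Fin n) ℝ) : ℝ :=
  Matrix.trace (A * Bᵀ)

noncomputable def frobNorm {n : ℕ} (A : Matrix (Fin n) (Fin n) ℝ) : ℝ :=
  Real.sqrt (∑ i, ∑ j, (A i j) ^ 2)

noncomputable def specNorm {n : ℕ} (A : Matrix (Fin n) (Fin n) ℝ) : ℝ :=
  sSup {s : ℝ | ∃ u : Fin n → ℝ, (∑ k, u k ^ 2) = 1 ∧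
    s = Real.sqrt (∑ i, (A.mulVec u i) ^ 2)}

def spectrahedron (n : ℕ) : Set (Matrix (Fin n) (Fin n) ℝ) :=
  {X | X.PosSemidef ∧ X.trace = 1}

def IsProjOn {n : ℕ} (S : Set (Matrix (Fin n) (Fin n) ℝ))
    (M P : Matrix (Fin n) (Fin n) ℝ) : Prop :=
  P ∈ S ∧ ∀ Z ∈ S, frobNorm (M - P) ≤ frobNorm (M - Z)

def IsEigenDecomp {n : ℕ} (M : Matrix (Fin n) (Fin n) ℝ)
    (lam : Fin n → ℝ) (v : Fin n → Fin n → ℝ) : Prop :=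
  Antitone lam ∧
  (∀ i j, (∑ k, v i k * v j k) = if i = j then (1 : ℝ) else 0) ∧
  M = ∑ i, lam i • Matrix.vecMulVec (v i) (v i)

def IsGradient {n : ℕ} (f : Matrix (Fin n) (Fin n) ℝ → ℝ)
    (g : Matrix (Fin n) (Fin n) ℝ → Matrix (Fin n) (Fin n) ℝ) : Prop :=
  ∀ X H : Matrix (Fin n) (Fin n) ℝ,
    HasDerivAt (fun t : ℝ => f (X + t • H)) (frobInner (g X) H) 0

def IsMinimizerOn {n : ℕ} (f : Matrix (Fin n) (Fin n) ℝ → ℝ)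
    (S : Set (Matrix (Fin n) (Fin n) ℝ)) (Xs : Matrix (Fin n) (Fin n) ℝ) : Prop :=
  Xs ∈ S ∧ ∀ Y ∈ S, f Xs ≤ f Y


def scaledSpectrahedron (n : ℕ) (c : ℝ) : Set (Matrix (Fin n) (Fin n) ℝ) :=
  {X | ∃ Y ∈ spectrahedron n, X = c • Y}

section WaterLevel

variable {ι : Type*} [Fintype ι]

lemma continuous_sum_max_zero_sub (lam : ι → ℝ) :
    Continuous fun σ : ℝ => ∑ i, max 0 (lam i - σ) := by
  fun_prop

lemma exists_sum_max_zero_sub_eq [Nonempty ι] (lam : ι → ℝ) {c : ℝ} (hc : 0 ≤ c) :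
    ∃ σ, ∑ i, max 0 (lam i - σ) = c := by
  obtain ⟨i₀, hi₀⟩ := Finite.exists_max lam
  have h_top : ∑ i, max 0 (lam i - lam i₀) = 0 :=
    Finset.sum_eq_zero fun i _ => max_eq_left (by linarith [hi₀ i])
  have h_bot : c ≤ ∑ i, max 0 (lam i - (lam i₀ - c)) :=
    calc c = max 0 (lam i₀ - (lam i₀ - c)) := by rw [sub_sub_cancel, max_eq_right hc]
      _ ≤ _ := Finset.single_le_sum (f := fun i => max 0 (lam i - (lam i₀ - c)))
          (fun i _ => le_max_left 0 _) (Finset.mem_univ i₀)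
  obtain ⟨σ, -, hσ⟩ := intermediate_value_Icc' (by linarith : lam i₀ - c ≤ lam i₀)
    (continuous_sum_max_zero_sub lam).continuousOn ⟨h_top.symm ▸ hc, h_bot⟩
  exact ⟨σ, hσ⟩

lemma sum_max_zero_sub_lt (lam : ι → ℝ) {σ τ : ℝ} (hστ : σ < τ)
    (hτ : 0 < ∑ i, max 0 (lam i - τ)) :
    ∑ i, max 0 (lam i - τ) < ∑ i, max 0 (lam i - σ) := by
  obtain ⟨i, hi⟩ : ∃ i, 0 < lam i - τ := by
    by_contra! h
    simp [max_eq_left (h _)] at hτ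
  refine Finset.sum_lt_sum (fun j _ => max_le_max le_rfl (by linarith)) ⟨i, Finset.mem_univ i, ?_⟩
  rw [max_eq_right hi.le, max_eq_right (by linarith)]
  linarith

lemma existsUnique_sum_max_zero_sub_eq [Nonempty ι] (lam : ι → ℝ) {c : ℝ} (hc : 0 < c) :
    ∃! σ, ∑ i, max 0 (lam i - σ) = c := by
  obtain ⟨σ, hσ⟩ := exists_sum_max_zero_sub_eq lam hc.le
  refine ⟨σ, hσ, fun τ hτ => ?_⟩
  rcases lt_trichotomy τ σ with h | rfl | h
  · linarith [sum_max_zero_sub_lt lam h (hσ ▸ hc)]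
  · rfl
  · linarith [sum_max_zero_sub_lt lam h (hτ ▸ hc)]

lemma sum_sub_max_zero_sub_mul_nonneg (lam w : ι → ℝ) (σ : ℝ) (hw : ∀ i, 0 ≤ w i)
    (hsum : ∑ i, w i = ∑ i, max 0 (lam i - σ)) :
    0 ≤ ∑ i, (lam i - max 0 (lam i - σ)) * (max 0 (lam i - σ) - w i) := by
  have hterm : ∀ i, σ * (max 0 (lam i - σ) - w i)
      ≤ (lam i - max 0 (lam i - σ)) * (max 0 (lam i - σ) - w i) := by
    intro i
    rcases le_total (lam i) σ with h | h
    · rw [max_eq_left (by linarith)]; nlinarith [hw i]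
    · rw [max_eq_right (by linarith), sub_sub_cancel]
  calc (0 : ℝ) = ∑ i, σ * (max 0 (lam i - σ) - w i) := by
        rw [← Finset.mul_sum, Finset.sum_sub_distrib, hsum, sub_self, mul_zero]
    _ ≤ _ := Finset.sum_le_sum fun i _ => hterm i

end WaterLevel

section Frobenius

variable {n : ℕ}

lemma frobNorm_eq_sqrt_frobInner (A : Matrix (Fin n) (Fin n) ℝ) :
    frobNorm A = Real.sqrt (frobInner A A) := by
  simp [frobNorm, frobInner, Matrix.trace, Matrix.mul_apply, sq]

lemma frobInner_self_nonneg (A : Matrix (Fin n) (Fin n) ℝ) : 0 ≤ frobInner A A := by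
  simpa [frobInner, Matrix.trace, Matrix.mul_apply] using
    Finset.sum_nonneg fun i _ => Finset.sum_nonneg fun j _ => mul_self_nonneg (A i j)

lemma frobInner_comm (A B : Matrix (Fin n) (Fin n) ℝ) : frobInner A B = frobInner B A := by
  rw [frobInner, ← Matrix.trace_transpose, Matrix.transpose_mul, Matrix.transpose_transpose,
    frobInner]

lemma frobInner_add_add_self (A B : Matrix (Fin n) (Fin n) ℝ) :
    frobInner (A + B) (A + B) = frobInner A A + 2 * frobInner A B + frobInner B B := by
  have h := frobInner_comm B A
  simp only [frobInner, Matrix.transpose_add, Matrix.add_mul, Matrix.mul_add,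
    Matrix.trace_add] at h ⊢
  linarith

lemma frobNorm_sub_le_of_frobInner_nonneg {M P Z : Matrix (Fin n) (Fin n) ℝ}
    (h : 0 ≤ frobInner (M - P) (P - Z)) : frobNorm (M - P) ≤ frobNorm (M - Z) := by
  rw [frobNorm_eq_sqrt_frobInner, frobNorm_eq_sqrt_frobInner,
    show M - Z = (M - P) + (P - Z) by abel, frobInner_add_add_self]
  exact Real.sqrt_le_sqrt (by linarith [frobInner_self_nonneg (P - Z)])

lemma frobInner_transpose_mul_mul (V A B : Matrix (Fin n) (Fin n) ℝ) :
    frobInner (Vᵀ * A * V) B = frobInner A (V * B * Vᵀ) := by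
  simp only [frobInner, Matrix.transpose_mul, Matrix.transpose_transpose, Matrix.mul_assoc]
  rw [Matrix.trace_mul_comm]
  simp only [Matrix.mul_assoc]

lemma frobInner_diagonal_left (d : Fin n → ℝ) (A : Matrix (Fin n) (Fin n) ℝ) :
    frobInner (Matrix.diagonal d) A = ∑ i, d i * A i i := by
  simp [frobInner, Matrix.trace, Matrix.diagonal_mul]

end Frobenius

lemma mem_scaledSpectrahedron_iff {n : ℕ} {c : ℝ} (hc : 0 < c) {X : Matrix (Fin n) (Fin n) ℝ} :
    X ∈ scaledSpectrahedron n c ↔ X.PosSemidef ∧ X.trace = c := by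
  constructor
  · rintro ⟨Y, ⟨hY, hYtr⟩, rfl⟩
    exact ⟨hY.smul hc.le, by rw [Matrix.trace_smul, hYtr, smul_eq_mul, mul_one]⟩
  · rintro ⟨hX, hXtr⟩
    refine ⟨c⁻¹ • X, ⟨hX.smul (inv_nonneg.mpr hc.le), ?_⟩, ?_⟩
    · rw [Matrix.trace_smul, hXtr, smul_eq_mul, inv_mul_cancel₀ hc.ne']
    · rw [smul_smul, mul_inv_cancel₀ hc.ne', one_smul]

lemma mul_transpose_eq_one_of_orthonormal {n : ℕ} {v : Fin n → Fin n → ℝ}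
    (hv : ∀ i j, ∑ k, v i k * v j k = if i = j then (1 : ℝ) else 0) :
    Matrix.of v * (Matrix.of v)ᵀ = 1 := by
  ext i j
  simp [Matrix.mul_apply, Matrix.one_apply, hv]

lemma sum_smul_vecMulVec_self {n : ℕ} (d : Fin n → ℝ) (v : Fin n → Fin n → ℝ) :
    ∑ i, d i • Matrix.vecMulVec (v i) (v i) = (Matrix.of v)ᵀ * Matrix.diagonal d * Matrix.of v := by
  ext a b
  rw [Matrix.mul_apply]
  simp only [Matrix.sum_apply, Matrix.smul_apply, Matrix.vecMulVec_apply, smul_eq_mul,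
    Matrix.mul_diagonal, Matrix.transpose_apply, Matrix.of_apply]
  exact Finset.sum_congr rfl fun i _ => by ring

lemma isProjOn_scaledSpectrahedron {n : ℕ} {V : Matrix (Fin n) (Fin n) ℝ} (hV : V * Vᵀ = 1)
    (lam : Fin n → ℝ) {c σ : ℝ} (hc : 0 < c) (hσ : ∑ i, max 0 (lam i - σ) = c) :
    IsProjOn (scaledSpectrahedron n c) (Vᵀ * Matrix.diagonal lam * V)
      (Vᵀ * Matrix.diagonal (fun i => max 0 (lam i - σ)) * V) := by
  have hVt : Vᵀ * V = 1 := mul_eq_one_comm.mp hV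
  have hconj : ∀ A, V * (Vᵀ * A * V) * Vᵀ = A := fun A => by
    simp only [← Matrix.mul_assoc, hV, Matrix.one_mul]
    rw [Matrix.mul_assoc, hV, Matrix.mul_one]
  have htrace : ∀ A, (V * A * Vᵀ).trace = A.trace := fun A => by
    rw [Matrix.trace_mul_cycle, hVt, Matrix.one_mul]
  refine ⟨(mem_scaledSpectrahedron_iff hc).2 ⟨?_, ?_⟩, fun Z hZ => ?_⟩
  · simpa using
      (Matrix.PosSemidef.diagonal fun i => le_max_left 0 (lam i - σ)).conjTranspose_mul_mul_same V
  · rw [← htrace, hconj, Matrix.trace_diagonal, hσ]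
  obtain ⟨hZ, hZtr⟩ := (mem_scaledSpectrahedron_iff hc).1 hZ
  apply frobNorm_sub_le_of_frobInner_nonneg
  rw [← Matrix.sub_mul, ← Matrix.mul_sub, Matrix.diagonal_sub, frobInner_transpose_mul_mul,
    Matrix.mul_sub, Matrix.sub_mul, hconj, frobInner_diagonal_left]
  simp only [Matrix.sub_apply, Matrix.diagonal_apply_eq]
  refine sum_sub_max_zero_sub_mul_nonneg lam (fun i => (V * Z * Vᵀ) i i) σ (fun i => ?_) ?_
  · simpa using (hZ.mul_mul_conjTranspose_same V).diag_nonneg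
  · simpa [Matrix.trace, hσ] using (htrace Z).trans hZtr

theorem stmt6_general (n : ℕ) (hn : 1 ≤ n) (ζ : ℝ) (hζ : 0 ≤ ζ)
    (M : Matrix (Fin n) (Fin n) ℝ)
    (lam : Fin n → ℝ) (v : Fin n → Fin n → ℝ)
    (hdecomp : IsEigenDecomp M lam v) :
    (∃! sigma : ℝ, ∑ i, max 0 (lam i - sigma) = 1 + ζ) ∧
      ∀ sigma : ℝ, (∑ i, max 0 (lam i - sigma) = 1 + ζ) →
        IsProjOn (scaledSpectrahedron n (1 + ζ)) M
          (∑ i, max 0 (lam i - sigma) • Matrix.vecMulVec (v i) (v i)) := by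
  obtain ⟨-, hv, rfl⟩ := hdecomp
  have hc : 0 < 1 + ζ := by linarith
  have : Nonempty (Fin n) := ⟨⟨0, hn⟩⟩
  refine ⟨existsUnique_sum_max_zero_sub_eq lam hc, fun sigma hsigma => ?_⟩
  rw [sum_smul_vecMulVec_self, sum_smul_vecMulVec_self]
  exact isProjOn_scaledSpectrahedron (mul_transpose_eq_one_of_orthonormal hv) lam hc hsigma

/-- projection onto the scaled spectrahedron (1+ζ)S_n. -/
theorem stmt6 (n : ℕ) (hn : 1 ≤ n) (ζ : ℝ) (hζ : 0 ≤ ζ)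
    (M : Matrix (Fin n) (Fin n) ℝ) (hM : M.IsSymm)
    (lam : Fin n → ℝ) (v : Fin n → Fin n → ℝ)
    (hdecomp : IsEigenDecomp M lam v) :
    (∃! sigma : ℝ, ∑ i, max 0 (lam i - sigma) = 1 + ζ) ∧
      ∀ sigma : ℝ, (∑ i, max 0 (lam i - sigma) = 1 + ζ) →
        IsProjOn (scaledSpectrahedron n (1 + ζ)) M
          (∑ i, max 0 (lam i - sigma) • Matrix.vecMulVec (v i) (v i)) :=
  stmt6_general n hn ζ hζ M lam v hdecomp

end LRSGD
end

section
/- Let f : 𝕊^n → ℝ be convex and β-smooth, and let X* be a minimizer of f over S_n with rank(X*) = r and μ_n = λ_n(∇f(X*)). Let X ∈ S_n with rank(X) ≤ r, let V ∈ ℝ^{n×r} be a matrix with orthonormal columns whose columns are eigenvectors of X spanning its range (extended arbitrarily with orthonormal vectors if rank(X) < r), and let ∇̃ ∈ 𝕊^n satisfy ‖∇̃ − ∇f(X)‖ ≤ ξ (spectral norm). Then −⟨VVᵀ, ∇̃⟩ ≥ −rμ_n − rξ − √r · ‖X − X*‖_F · (√r·β + 2√2·‖∇̃‖/λ_r(X*)),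 where ⟨A, B⟩ = Tr(A Bᵀ) and ‖·‖ is the spectral norm. -/
/-!
Let `W` collect the eigenvectors of the `r` largest eigenvalues of `X*` and split
`⟨VVᵀ, ∇̃⟩ = (tr Vᵀ∇̃V - tr Wᵀ∇̃W) + tr Wᵀ(∇̃ - ∇f(X))W + tr Wᵀ(∇f(X) - ∇f(X*))W + tr Wᵀ∇f(X*)W`.
By first-order optimality on the spectrahedron (complementary slackness), every eigenvector of
`X*` with a positive eigenvalue is a bottom eigenvector of `∇f(X*)`, so the last term is `r μ_n`.
The middle terms are at most `r ξ` and `√r β ‖X - X*‖_F`. The first is at most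
`2 ‖∇̃‖ √r ‖(I - VVᵀ)W‖_F`, and since the range of `X` lies in that of `V`,
`(I - VVᵀ)(X* - X)W = (I - VVᵀ)W diag(λ_1, …, λ_r)`, whence the Davis–Kahan bound
`λ_r ‖(I - VVᵀ)W‖_F ≤ ‖X - X*‖_F`.
-/

open scoped BigOperators
open MeasureTheory
open scoped Matrix

namespace LRSGD

open Matrix

section Trace

variable {m k k' : Type*} [Fintype m] [Fintype k] [Fintype k']

lemma trace_transpose_mul_eq_sum (A B : Matrix m k ℝ) :
    (Aᵀ * B).trace = ∑ i, ∑ j, A i j * B i j := by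
  simp only [trace, diag, mul_apply, transpose_apply]
  exact Finset.sum_comm

lemma trace_transpose_mul_self_nonneg (A : Matrix m k ℝ) : 0 ≤ (Aᵀ * A).trace := by
  rw [trace_transpose_mul_eq_sum]
  exact Finset.sum_nonneg fun i _ => Finset.sum_nonneg fun j _ => mul_self_nonneg _

lemma trace_transpose_mul_le (A B : Matrix m k ℝ) :
    (Aᵀ * B).trace ≤ √(Aᵀ * A).trace * √(Bᵀ * B).trace := by
  simp only [trace_transpose_mul_eq_sum, ← Finset.sum_product', ← sq]
  exact Real.sum_mul_le_sqrt_mul_sqrt _ _ _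

lemma trace_transpose_mul_self_eq_sum (A : Matrix m k ℝ) :
    (Aᵀ * A).trace = ∑ j, Aᵀ j ⬝ᵥ Aᵀ j := by
  simp [trace, mul_apply, dotProduct]

lemma trace_transpose_mul_mul_eq_sum (M : Matrix m m ℝ) (A B : Matrix m k ℝ) :
    (Aᵀ * M * B).trace = ∑ j, Aᵀ j ⬝ᵥ M *ᵥ Bᵀ j := by
  simp only [trace, diag, mul_apply, dotProduct, mulVec, transpose_apply, Finset.sum_mul,
    Finset.mul_sum, mul_assoc]
  exact Finset.sum_congr rfl fun j _ => Finset.sum_comm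

lemma sq_mul_trace_le_trace_mul_diagonal [DecidableEq k] (R : Matrix m k ℝ) {lam : k → ℝ}
    {c : ℝ} (hc : 0 ≤ c) (hlam : ∀ j, c ≤ lam j) :
    c ^ 2 * (Rᵀ * R).trace ≤ ((R * diagonal lam)ᵀ * (R * diagonal lam)).trace := by
  simp only [trace_transpose_mul_eq_sum, mul_diagonal, Finset.mul_sum]
  refine Finset.sum_le_sum fun i _ => Finset.sum_le_sum fun j _ => ?_
  have h : c ^ 2 ≤ lam j ^ 2 := pow_le_pow_left₀ hc (hlam j) 2
  nlinarith [mul_le_mul_of_nonneg_right h (mul_self_nonneg (R i j))]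

variable [DecidableEq m]

lemma trace_sub_trace_eq_of_isSymm {D : Matrix m m ℝ} (hD : D.IsSymm) (U : Matrix m k ℝ)
    (W : Matrix m k' ℝ) :
    (Uᵀ * D * U).trace - (Wᵀ * D * W).trace
      = (((1 - W * Wᵀ) * U)ᵀ * D * U).trace - (((1 - U * Uᵀ) * W)ᵀ * D * W).trace := by
  have hcross : (Uᵀ * (W * Wᵀ) * D * U).trace = (Wᵀ * (U * Uᵀ) * D * W).trace := by
    rw [← trace_transpose]
    simp only [transpose_mul, transpose_transpose, hD.eq, ← Matrix.mul_assoc]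
    rw [Matrix.mul_assoc (Uᵀ * D * W), trace_mul_comm]
    simp only [← Matrix.mul_assoc]
  simp only [transpose_mul, transpose_sub, transpose_transpose, Matrix.sub_mul, Matrix.one_mul,
    trace_sub]
  linarith

-- `‖sin Θ‖_F²` for the principal angles between the column spaces of `U` and `W`, when both
-- have orthonormal columns.
def sinThetaSq (U : Matrix m k ℝ) (W : Matrix m k' ℝ) : ℝ :=
  (((1 - U * Uᵀ) * W)ᵀ * ((1 - U * Uᵀ) * W)).trace

end Trace

section Orthonormal

variable {m k k' l : Type*} [Fintype m] [Fintype k] [Fintype k'] [DecidableEq m]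
  [DecidableEq k] [DecidableEq k']

lemma one_sub_mul_transpose_mul_self {U : Matrix m k ℝ} (hU : Uᵀ * U = 1) :
    (1 - U * Uᵀ) * U = 0 := by
  rw [Matrix.sub_mul, Matrix.mul_assoc, hU, Matrix.mul_one, Matrix.one_mul, sub_self]

lemma one_sub_mul_transpose_mul_mul_transpose {U : Matrix m k ℝ} (hU : Uᵀ * U = 1)
    (A : Matrix k k ℝ) : (1 - U * Uᵀ) * (U * A * Uᵀ) = 0 := by
  rw [← Matrix.mul_assoc, ← Matrix.mul_assoc, one_sub_mul_transpose_mul_self hU, Matrix.zero_mul,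
    Matrix.zero_mul]

lemma transpose_mul_self_eq_add {U : Matrix m k ℝ} (hU : Uᵀ * U = 1) (M : Matrix m l ℝ) :
    Mᵀ * M = (Uᵀ * M)ᵀ * (Uᵀ * M) + ((1 - U * Uᵀ) * M)ᵀ * ((1 - U * Uᵀ) * M) := by
  have hP : (1 - U * Uᵀ)ᵀ * (1 - U * Uᵀ) = 1 - U * Uᵀ := by
    rw [transpose_sub, transpose_one, transpose_mul, transpose_transpose, Matrix.mul_sub,
      Matrix.mul_one, ← Matrix.mul_assoc, one_sub_mul_transpose_mul_self hU, Matrix.zero_mul,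
      sub_zero]
  calc Mᵀ * M = Mᵀ * (U * Uᵀ) * M + Mᵀ * (1 - U * Uᵀ) * M := by
        rw [← Matrix.add_mul, ← Matrix.mul_add, add_sub_cancel, Matrix.mul_one]
    _ = _ := by
        conv_lhs => rw [← hP]
        simp only [transpose_mul, transpose_transpose, Matrix.mul_assoc]

lemma trace_transpose_mul_self_mul_left_le [Fintype l] {U : Matrix m k ℝ} (hU : Uᵀ * U = 1)
    (M : Matrix m l ℝ) : ((Uᵀ * M)ᵀ * (Uᵀ * M)).trace ≤ (Mᵀ * M).trace := by
  rw [transpose_mul_self_eq_add hU M, trace_add]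
  linarith [trace_transpose_mul_self_nonneg ((1 - U * Uᵀ) * M)]

lemma trace_transpose_mul_self_one_sub_mul_le [Fintype l] {U : Matrix m k ℝ} (hU : Uᵀ * U = 1)
    (M : Matrix m l ℝ) :
    (((1 - U * Uᵀ) * M)ᵀ * ((1 - U * Uᵀ) * M)).trace ≤ (Mᵀ * M).trace := by
  rw [transpose_mul_self_eq_add hU M, trace_add]
  linarith [trace_transpose_mul_self_nonneg (Uᵀ * M)]

lemma trace_transpose_mul_self_mul_right_le [Fintype l] {W : Matrix m k ℝ} (hW : Wᵀ * W = 1)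
    (M : Matrix l m ℝ) : ((M * W)ᵀ * (M * W)).trace ≤ (Mᵀ * M).trace := by
  have h := trace_transpose_mul_self_mul_left_le hW Mᵀ
  simp only [transpose_mul, transpose_transpose] at h ⊢
  rw [trace_mul_comm Mᵀ, trace_mul_comm]
  exact h

lemma sinThetaSq_comm {U W : Matrix m k ℝ} (hU : Uᵀ * U = 1) (hW : Wᵀ * W = 1) :
    sinThetaSq W U = sinThetaSq U W := by
  have hU' := congrArg trace (transpose_mul_self_eq_add hW U)
  have hW' := congrArg trace (transpose_mul_self_eq_add hU W)
  have hcross : ((Wᵀ * U)ᵀ * (Wᵀ * U)).trace = ((Uᵀ * W)ᵀ * (Uᵀ * W)).trace := by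
    simp only [transpose_mul, transpose_transpose]
    rw [trace_mul_comm]
  rw [hU, trace_add] at hU'
  rw [hW, trace_add] at hW'
  rw [sinThetaSq, sinThetaSq]
  linarith

-- Davis–Kahan: `(1 - UUᵀ)(Y - X)W = (1 - UUᵀ)W Λ` because the range of `X` lies in that of `U`.
lemma sq_mul_sinThetaSq_le {U : Matrix m k' ℝ} {W : Matrix m k ℝ} (hU : Uᵀ * U = 1)
    (hW : Wᵀ * W = 1) {X Y : Matrix m m ℝ} (hX : (1 - U * Uᵀ) * X = 0) {lam : k → ℝ}
    (hY : Y * W = W * diagonal lam) {c : ℝ} (hc : 0 ≤ c) (hlam : ∀ j, c ≤ lam j) :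
    c ^ 2 * sinThetaSq U W ≤ ((Y - X)ᵀ * (Y - X)).trace := by
  have hproj : (1 - U * Uᵀ) * ((Y - X) * W) = (1 - U * Uᵀ) * W * diagonal lam := by
    rw [Matrix.sub_mul Y X W, Matrix.mul_sub, ← Matrix.mul_assoc _ X W, hX, Matrix.zero_mul,
      sub_zero, hY, Matrix.mul_assoc]
  calc c ^ 2 * sinThetaSq U W
      ≤ (((1 - U * Uᵀ) * W * diagonal lam)ᵀ * ((1 - U * Uᵀ) * W * diagonal lam)).trace :=
        sq_mul_trace_le_trace_mul_diagonal _ hc hlam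
    _ ≤ (((Y - X) * W)ᵀ * ((Y - X) * W)).trace :=
        hproj ▸ trace_transpose_mul_self_one_sub_mul_le hU _
    _ ≤ ((Y - X)ᵀ * (Y - X)).trace := trace_transpose_mul_self_mul_right_le hW _

end Orthonormal

section Norms

variable {n : ℕ} {k : Type*} [Fintype k]

lemma frobNorm_eq_sqrt_trace (A : Matrix (Fin n) (Fin n) ℝ) : frobNorm A = √(Aᵀ * A).trace := by
  simp only [frobNorm, trace_transpose_mul_eq_sum, sq]

lemma frobNorm_sub_comm (A B : Matrix (Fin n) (Fin n) ℝ) :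
    frobNorm (A - B) = frobNorm (B - A) := by
  rw [frobNorm_eq_sqrt_trace, frobNorm_eq_sqrt_trace, ← neg_sub B A, transpose_neg,
    Matrix.neg_mul, Matrix.mul_neg, neg_neg]

lemma frobInner_sub_right (A B C : Matrix (Fin n) (Fin n) ℝ) :
    frobInner A (B - C) = frobInner A B - frobInner A C := by
  simp only [frobInner, transpose_sub, Matrix.mul_sub, trace_sub]

lemma frobInner_vecMulVec_self (A : Matrix (Fin n) (Fin n) ℝ) (y : Fin n → ℝ) :
    frobInner A (vecMulVec y y) = y ⬝ᵥ A *ᵥ y := by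
  simp only [frobInner, trace, diag, mul_apply, transpose_apply, vecMulVec_apply, dotProduct,
    mulVec, Finset.mul_sum]
  exact Finset.sum_congr rfl fun i _ => Finset.sum_congr rfl fun j _ => by ring

lemma frobInner_mul_transpose_of_isSymm {D : Matrix (Fin n) (Fin n) ℝ} (hD : D.IsSymm)
    (V : Matrix (Fin n) k ℝ) : frobInner (V * Vᵀ) D = (Vᵀ * D * V).trace := by
  rw [frobInner, hD.eq, Matrix.mul_assoc, trace_mul_comm]

lemma norm_toLp_eq_sqrt_dotProduct (u : Fin n → ℝ) : ‖WithLp.toLp 2 u‖ = √(u ⬝ᵥ u) := by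
  simp [EuclideanSpace.norm_eq, dotProduct, sq]

lemma specNorm_eq_norm_toEuclideanCLM (M : Matrix (Fin n) (Fin n) ℝ) :
    specNorm M = ‖toEuclideanCLM (𝕜 := ℝ) M‖ := by
  rw [specNorm, ← ContinuousLinearMap.sSup_sphere_eq_norm]
  congr 1
  ext s
  simp only [Set.mem_ofPred_eq, Set.mem_image, mem_sphere_zero_iff_norm]
  constructor
  · rintro ⟨u, hu, rfl⟩
    exact ⟨WithLp.toLp 2 u, by simp [EuclideanSpace.norm_eq, hu], by simp [EuclideanSpace.norm_eq]⟩
  · rintro ⟨x, hx, rfl⟩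
    exact ⟨x.ofLp, by simpa [EuclideanSpace.norm_eq] using hx, by simp [EuclideanSpace.norm_eq]⟩

lemma specNorm_nonneg (M : Matrix (Fin n) (Fin n) ℝ) : 0 ≤ specNorm M :=
  specNorm_eq_norm_toEuclideanCLM M ▸ norm_nonneg _

lemma dotProduct_mulVec_le_specNorm (M : Matrix (Fin n) (Fin n) ℝ) (u v : Fin n → ℝ) :
    u ⬝ᵥ M *ᵥ v ≤ specNorm M * √(u ⬝ᵥ u) * √(v ⬝ᵥ v) := by
  rw [specNorm_eq_norm_toEuclideanCLM, ← norm_toLp_eq_sqrt_dotProduct,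
    ← norm_toLp_eq_sqrt_dotProduct, ← inner_toEuclideanCLM]
  calc _ ≤ ‖WithLp.toLp 2 u‖ * ‖toEuclideanCLM (𝕜 := ℝ) M (WithLp.toLp 2 v)‖ :=
        real_inner_le_norm _ _
    _ ≤ ‖WithLp.toLp 2 u‖ * (‖toEuclideanCLM (𝕜 := ℝ) M‖ * ‖WithLp.toLp 2 v‖) := by
        gcongr
        exact ContinuousLinearMap.le_opNorm _ _
    _ = _ := by ring

lemma trace_transpose_mul_mul_le_specNorm (M : Matrix (Fin n) (Fin n) ℝ)
    (A B : Matrix (Fin n) k ℝ) :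
    (Aᵀ * M * B).trace ≤ specNorm M * √(Aᵀ * A).trace * √(Bᵀ * B).trace := by
  have hsq : ∀ v : Fin n → ℝ, 0 ≤ v ⬝ᵥ v := fun v => dotProduct_self_star_nonneg v
  rw [trace_transpose_mul_mul_eq_sum, trace_transpose_mul_self_eq_sum,
    trace_transpose_mul_self_eq_sum, mul_assoc]
  calc ∑ j, Aᵀ j ⬝ᵥ M *ᵥ Bᵀ j
      ≤ ∑ j, specNorm M * (√(Aᵀ j ⬝ᵥ Aᵀ j) * √(Bᵀ j ⬝ᵥ Bᵀ j)) := by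
        gcongr with j
        rw [← mul_assoc]
        exact dotProduct_mulVec_le_specNorm M _ _
    _ ≤ _ := by
        rw [← Finset.mul_sum]
        gcongr
        · exact specNorm_nonneg M
        · exact Real.sum_sqrt_mul_sqrt_le _ (fun j => hsq _) (fun j => hsq _)

variable [DecidableEq k] {W : Matrix (Fin n) k ℝ}

lemma trace_transpose_mul_mul_le_card_mul_specNorm (hW : Wᵀ * W = 1)
    (A : Matrix (Fin n) (Fin n) ℝ) : (Wᵀ * A * W).trace ≤ Fintype.card k * specNorm A := by
  have h := trace_transpose_mul_mul_le_specNorm A W W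
  rwa [hW, trace_one, mul_assoc, Real.mul_self_sqrt (Nat.cast_nonneg _), mul_comm] at h

lemma trace_transpose_mul_mul_le_frobNorm (hW : Wᵀ * W = 1) (A : Matrix (Fin n) (Fin n) ℝ) :
    (Wᵀ * A * W).trace ≤ √(Fintype.card k) * frobNorm A := by
  rw [Matrix.mul_assoc, frobNorm_eq_sqrt_trace]
  calc (Wᵀ * (A * W)).trace ≤ √(Wᵀ * W).trace * √((A * W)ᵀ * (A * W)).trace :=
        trace_transpose_mul_le _ _
    _ ≤ √(Fintype.card k) * √(Aᵀ * A).trace := by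
        rw [hW, trace_one]
        gcongr
        exact trace_transpose_mul_self_mul_right_le hW A

end Norms

section Perturbation

variable {n : ℕ} {k : Type*} [Fintype k] [DecidableEq k] {D : Matrix (Fin n) (Fin n) ℝ}
  {U W : Matrix (Fin n) k ℝ}

lemma trace_sub_trace_le_specNorm_mul_sinTheta (hD : D.IsSymm) (hU : Uᵀ * U = 1)
    (hW : Wᵀ * W = 1) :
    (Uᵀ * D * U).trace - (Wᵀ * D * W).trace
      ≤ 2 * specNorm D * √(Fintype.card k) * √(sinThetaSq U W) := by
  have hcard : ∀ V : Matrix (Fin n) k ℝ, Vᵀ * V = 1 → (Vᵀ * V).trace = Fintype.card k :=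
    fun V hV => by rw [hV, trace_one]
  have hUW := trace_transpose_mul_mul_le_specNorm D ((1 - W * Wᵀ) * U) U
  have hWU := trace_transpose_mul_mul_le_specNorm D (-((1 - U * Uᵀ) * W)) W
  rw [← sinThetaSq, sinThetaSq_comm hU hW, hcard U hU] at hUW
  rw [hcard W hW] at hWU
  simp only [transpose_neg, Matrix.neg_mul, Matrix.mul_neg, neg_neg, trace_neg] at hWU
  rw [← sinThetaSq] at hWU
  rw [trace_sub_trace_eq_of_isSymm hD]
  linarith

lemma trace_sub_trace_le_specNorm_mul_frobNorm_div (hD : D.IsSymm) (hU : Uᵀ * U = 1)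
    (hW : Wᵀ * W = 1) {X Y : Matrix (Fin n) (Fin n) ℝ} (hX : (1 - U * Uᵀ) * X = 0)
    {lam : k → ℝ} (hY : Y * W = W * diagonal lam) {c : ℝ} (hc : 0 < c) (hlam : ∀ j, c ≤ lam j) :
    (Uᵀ * D * U).trace - (Wᵀ * D * W).trace
      ≤ 2 * specNorm D * √(Fintype.card k) * (frobNorm (X - Y) / c) := by
  have hsin : √(sinThetaSq U W) ≤ frobNorm (X - Y) / c := by
    rw [le_div_iff₀ hc, frobNorm_sub_comm, frobNorm_eq_sqrt_trace]
    calc _ = √(c ^ 2 * sinThetaSq U W) := by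
          rw [Real.sqrt_mul (sq_nonneg c), Real.sqrt_sq hc.le, mul_comm]
      _ ≤ _ := Real.sqrt_le_sqrt (sq_mul_sinThetaSq_le hU hW hX hY hc.le hlam)
  exact (trace_sub_trace_le_specNorm_mul_sinTheta hD hU hW).trans
    (mul_le_mul_of_nonneg_left hsin
      (mul_nonneg (mul_nonneg zero_le_two (specNorm_nonneg D)) (Real.sqrt_nonneg _)))

end Perturbation

def topEigenvectors {n : ℕ} (v : Fin n → Fin n → ℝ) {r : ℕ} (hrn : r ≤ n) :
    Matrix (Fin n) (Fin r) ℝ :=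
  (of v)ᵀ.submatrix id (Fin.castLE hrn)

namespace IsEigenDecomp

variable {n : ℕ} {M : Matrix (Fin n) (Fin n) ℝ} {lam : Fin n → ℝ} {v : Fin n → Fin n → ℝ}

lemma mul_transpose_eq_one (h : IsEigenDecomp M lam v) : of v * (of v)ᵀ = 1 := by
  ext i j
  simpa [mul_apply, one_apply] using h.2.1 i j

lemma transpose_mul_eq_one (h : IsEigenDecomp M lam v) : (of v)ᵀ * of v = 1 :=
  mul_eq_one_comm.mp h.mul_transpose_eq_one

lemma dotProduct_self (h : IsEigenDecomp M lam v) (i : Fin n) : v i ⬝ᵥ v i = 1 := by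
  simpa [dotProduct] using h.2.1 i i

lemma eq_transpose_mul_diagonal_mul (h : IsEigenDecomp M lam v) :
    M = (of v)ᵀ * diagonal lam * of v := by
  conv_lhs => rw [h.2.2]
  ext k l
  simp only [mul_apply, diagonal_apply, vecMulVec_apply, Matrix.sum_apply, Matrix.smul_apply,
    smul_eq_mul, transpose_apply, of_apply, mul_ite, mul_zero, Finset.sum_ite_eq',
    Finset.mem_univ, if_true]
  exact Finset.sum_congr rfl fun j _ => by ring

lemma mul_mul_transpose_eq_diagonal (h : IsEigenDecomp M lam v) :
    of v * M * (of v)ᵀ = diagonal lam := by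
  rw [h.eq_transpose_mul_diagonal_mul, ← Matrix.mul_assoc, ← Matrix.mul_assoc,
    h.mul_transpose_eq_one, Matrix.one_mul, Matrix.mul_assoc, h.mul_transpose_eq_one,
    Matrix.mul_one]

lemma mul_transpose_eq (h : IsEigenDecomp M lam v) : M * (of v)ᵀ = (of v)ᵀ * diagonal lam := by
  rw [h.eq_transpose_mul_diagonal_mul, Matrix.mul_assoc, h.mul_transpose_eq_one, Matrix.mul_one]

lemma dotProduct_mulVec_self (h : IsEigenDecomp M lam v) (i : Fin n) :
    v i ⬝ᵥ M *ᵥ v i = lam i := by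
  have := congrFun (congrFun h.mul_mul_transpose_eq_diagonal i) i
  rw [diagonal_apply_eq] at this
  rw [← this]
  simp only [mul_apply, dotProduct, mulVec, Finset.mul_sum, Finset.sum_mul, of_apply,
    transpose_apply, mul_assoc]
  exact Finset.sum_comm

lemma trace_eq_sum (h : IsEigenDecomp M lam v) : M.trace = ∑ i, lam i := by
  rw [h.eq_transpose_mul_diagonal_mul, trace_mul_comm, ← Matrix.mul_assoc,
    h.mul_transpose_eq_one, Matrix.one_mul, trace_diagonal]

lemma frobInner_eq_sum (h : IsEigenDecomp M lam v) (A : Matrix (Fin n) (Fin n) ℝ) :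
    frobInner A M = ∑ i, lam i * (v i ⬝ᵥ A *ᵥ v i) := by
  rw [h.2.2]
  simp only [frobInner, transpose_sum, transpose_smul, Matrix.mul_sum, Matrix.mul_smul, trace_sum,
    trace_smul, smul_eq_mul]
  exact Finset.sum_congr rfl fun i _ => by rw [← frobInner_vecMulVec_self]; rfl

lemma nonneg_of_posSemidef (h : IsEigenDecomp M lam v) (hM : M.PosSemidef) (i : Fin n) :
    0 ≤ lam i := by
  have := hM.mul_mul_conjTranspose_same (of v)
  rw [conjTranspose_eq_transpose_of_trivial, h.mul_mul_transpose_eq_diagonal] at this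
  exact posSemidef_diagonal_iff.mp this i

lemma rank_eq_card (h : IsEigenDecomp M lam v) : M.rank = Fintype.card {i // lam i ≠ 0} := by
  have hunit : IsUnit (of v).det := isUnit_det_of_left_inverse h.transpose_mul_eq_one
  rw [h.eq_transpose_mul_diagonal_mul, rank_mul_eq_left_of_isUnit_det _ _ hunit,
    rank_mul_eq_right_of_isUnit_det _ _ (by simpa using hunit), rank_diagonal]

lemma pos_of_lt_rank (h : IsEigenDecomp M lam v) (hM : M.PosSemidef) {i : Fin n}
    (hi : i.val < M.rank) : 0 < lam i := by
  by_contra! hneg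
  have hlt : ∀ j : Fin n, lam j ≠ 0 → j.val < i.val := fun j hj => by
    by_contra! hij
    exact hj (le_antisymm ((h.1 (Fin.le_def.2 hij)).trans hneg) (h.nonneg_of_posSemidef hM j))
  have hcard : Fintype.card {j // lam j ≠ 0} ≤ i.val := by
    simpa using Fintype.card_le_of_injective
      (fun j : {j // lam j ≠ 0} => (⟨j.1.val, hlt j.1 j.2⟩ : Fin i.val))
      fun a b hab => Subtype.ext (Fin.ext (Fin.mk.inj_iff.1 hab))
  rw [h.rank_eq_card] at hi
  omega

lemma mul_le_dotProduct_mulVec (h : IsEigenDecomp M lam v) {c : ℝ} (hc : ∀ i, c ≤ lam i)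
    (y : Fin n → ℝ) : c * (y ⬝ᵥ y) ≤ y ⬝ᵥ M *ᵥ y := by
  have hT : ∀ x, y ⬝ᵥ (of v)ᵀ *ᵥ x = (of v *ᵥ y) ⬝ᵥ x := fun x => by
    rw [dotProduct_mulVec, vecMul_transpose]
  have hnorm : (of v *ᵥ y) ⬝ᵥ (of v *ᵥ y) = y ⬝ᵥ y := by
    rw [← hT, mulVec_mulVec, h.transpose_mul_eq_one, one_mulVec]
  rw [h.eq_transpose_mul_diagonal_mul, ← mulVec_mulVec, ← mulVec_mulVec, hT, ← hnorm]
  simp only [dotProduct, mulVec_diagonal, Finset.mul_sum]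
  exact Finset.sum_le_sum fun i _ => by nlinarith [hc i, mul_self_nonneg ((of v *ᵥ y) i)]

variable {r : ℕ} (hrn : r ≤ n)

lemma transpose_mul_topEigenvectors (h : IsEigenDecomp M lam v) :
    (topEigenvectors v hrn)ᵀ * topEigenvectors v hrn = 1 := by
  rw [topEigenvectors, transpose_submatrix, ← submatrix_mul _ _ _ _ _ Function.bijective_id,
    transpose_transpose, h.mul_transpose_eq_one, submatrix_one _ (Fin.castLE_injective hrn)]

lemma mul_topEigenvectors (h : IsEigenDecomp M lam v) :
    M * topEigenvectors v hrn = topEigenvectors v hrn * diagonal (lam ∘ Fin.castLE hrn) := by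
  ext i j
  have := congrFun (congrFun h.mul_transpose_eq i) (Fin.castLE hrn j)
  rw [mul_diagonal] at this
  rw [mul_diagonal]
  exact this

end IsEigenDecomp

section Optimality

variable {n : ℕ} {f : Matrix (Fin n) (Fin n) ℝ → ℝ}
  {g : Matrix (Fin n) (Fin n) ℝ → Matrix (Fin n) (Fin n) ℝ} {Xs : Matrix (Fin n) (Fin n) ℝ}

lemma convex_spectrahedron (n : ℕ) : Convex ℝ (spectrahedron n) := by
  intro X hX Y hY a b ha hb hab
  refine ⟨(hX.1.smul ha).add (hY.1.smul hb), ?_⟩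
  rw [trace_add, trace_smul, trace_smul, hX.2, hY.2, smul_eq_mul, smul_eq_mul, mul_one, mul_one,
    hab]

lemma vecMulVec_self_mem_spectrahedron {y : Fin n → ℝ} (hy : y ⬝ᵥ y = 1) :
    vecMulVec y y ∈ spectrahedron n :=
  ⟨posSemidef_vecMulVec_self_star y, by simpa [trace, vecMulVec_apply, dotProduct] using hy⟩

lemma IsMinimizerOn.frobInner_sub_nonneg (hgrad : IsGradient f g)
    {S : Set (Matrix (Fin n) (Fin n) ℝ)} (hS : Convex ℝ S) (hmin : IsMinimizerOn f S Xs)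
    {Z : Matrix (Fin n) (Fin n) ℝ} (hZ : Z ∈ S) : 0 ≤ frobInner (g Xs) (Z - Xs) := by
  have hloc : IsLocalMinOn (fun t : ℝ => f (Xs + t • (Z - Xs))) (Set.Icc 0 1) 0 := by
    refine IsMinOn.localize fun t ht => ?_
    simpa using hmin.2 _ (hS.add_smul_sub_mem hmin.1 hZ ht)
  have h1 : (1 : ℝ) ∈ posTangentConeAt (Set.Icc (0 : ℝ) 1) 0 :=
    mem_posTangentConeAt_of_segment_subset (by simp [segment_eq_Icc])
  simpa using hloc.hasFDerivWithinAt_nonneg (hgrad Xs (Z - Xs)).hasFDerivAt.hasFDerivWithinAt h1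

variable {mu lam : Fin n → ℝ} {w v : Fin n → Fin n → ℝ}

-- Complementary slackness: `⟨∇f(X*), X*⟩ ≤ μ_n` by optimality, while every eigenvector of `X*`
-- has Rayleigh quotient `≥ μ_n` and the eigenvalues of `X*` are nonnegative with sum `1`.
lemma IsMinimizerOn.dotProduct_mulVec_eq_of_ne_zero (hgrad : IsGradient f g)
    (hmin : IsMinimizerOn f (spectrahedron n) Xs) (hG : IsEigenDecomp (g Xs) mu w)
    (hXs : IsEigenDecomp Xs lam v) {i : Fin n} (hi : lam i ≠ 0) :
    v i ⬝ᵥ g Xs *ᵥ v i = mu ⟨n - 1, Nat.sub_one_lt_of_lt i.pos⟩ := by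
  set μ := mu ⟨n - 1, Nat.sub_one_lt_of_lt i.pos⟩
  have hq : ∀ j, μ ≤ v j ⬝ᵥ g Xs *ᵥ v j := fun j => by
    simpa [hXs.dotProduct_self j] using
      hG.mul_le_dotProduct_mulVec (fun k => hG.1 (Fin.le_def.2 (Nat.le_sub_one_of_lt k.2))) (v j)
  have hopt := hmin.frobInner_sub_nonneg hgrad (convex_spectrahedron n)
    (vecMulVec_self_mem_spectrahedron (hG.dotProduct_self ⟨n - 1, Nat.sub_one_lt_of_lt i.pos⟩))
  rw [frobInner_sub_right, frobInner_vecMulVec_self, hG.dotProduct_mulVec_self,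
    hXs.frobInner_eq_sum] at hopt
  have hterm : ∀ j ∈ Finset.univ, 0 ≤ lam j * (v j ⬝ᵥ g Xs *ᵥ v j - μ) := fun j _ =>
    mul_nonneg (hXs.nonneg_of_posSemidef hmin.1.1 j) (sub_nonneg.2 (hq j))
  have hsum : ∑ j, lam j * (v j ⬝ᵥ g Xs *ᵥ v j - μ) = 0 := by
    refine le_antisymm ?_ (Finset.sum_nonneg hterm)
    simp only [mul_sub, Finset.sum_sub_distrib, ← Finset.sum_mul, ← hXs.trace_eq_sum, hmin.1.2]
    linarith
  exact sub_eq_zero.1 ((mul_eq_zero.1 ((Finset.sum_eq_zero_iff_of_nonneg hterm).1 hsum i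
    (Finset.mem_univ i))).resolve_left hi)

lemma IsMinimizerOn.trace_topEigenvectors_eq {r : ℕ} (hr : 1 ≤ r) (hrn : r ≤ n)
    (hgrad : IsGradient f g) (hmin : IsMinimizerOn f (spectrahedron n) Xs)
    (hG : IsEigenDecomp (g Xs) mu w) (hXs : IsEigenDecomp Xs lam v) (hrank : Xs.rank = r) :
    ((topEigenvectors v hrn)ᵀ * g Xs * topEigenvectors v hrn).trace
      = r * mu ⟨n - 1, Nat.sub_lt (hr.trans hrn) one_pos⟩ := by
  have hpos : ∀ j : Fin r, lam (Fin.castLE hrn j) ≠ 0 := fun j =>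
    (hXs.pos_of_lt_rank hmin.1.1 (by simp [hrank])).ne'
  have hcol : ∀ j, (topEigenvectors v hrn)ᵀ j ⬝ᵥ g Xs *ᵥ (topEigenvectors v hrn)ᵀ j
      = mu ⟨n - 1, Nat.sub_lt (hr.trans hrn) one_pos⟩ := fun j =>
    hmin.dotProduct_mulVec_eq_of_ne_zero hgrad hG hXs (hpos j)
  simp only [trace_transpose_mul_mul_eq_sum, hcol, Finset.sum_const, Finset.card_univ,
    Fintype.card_fin, nsmul_eq_mul]

end Optimality

lemma frobInner_mul_transpose_le {n r : ℕ} (hr : 1 ≤ r) (hrn : r ≤ n)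
    {f : Matrix (Fin n) (Fin n) ℝ → ℝ} {g : Matrix (Fin n) (Fin n) ℝ → Matrix (Fin n) (Fin n) ℝ}
    (hgrad : IsGradient f g) {Xs : Matrix (Fin n) (Fin n) ℝ}
    (hmin : IsMinimizerOn f (spectrahedron n) Xs) (hrank : Xs.rank = r) {mu lam : Fin n → ℝ}
    {w v : Fin n → Fin n → ℝ} (hG : IsEigenDecomp (g Xs) mu w) (hXs : IsEigenDecomp Xs lam v)
    {V : Matrix (Fin n) (Fin r) ℝ} (hV : Vᵀ * V = 1) {X : Matrix (Fin n) (Fin n) ℝ}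
    (hX : (1 - V * Vᵀ) * X = 0) {D : Matrix (Fin n) (Fin n) ℝ} (hD : D.IsSymm) :
    frobInner (V * Vᵀ) D
      ≤ r * mu ⟨n - 1, Nat.sub_lt (hr.trans hrn) one_pos⟩ + r * specNorm (D - g X)
        + √r * frobNorm (g X - g Xs)
        + 2 * specNorm D * √r
          * (frobNorm (X - Xs) / lam ⟨r - 1, (Nat.sub_lt hr one_pos).trans_le hrn⟩) := by
  set W := topEigenvectors v hrn
  have hW : Wᵀ * W = 1 := hXs.transpose_mul_topEigenvectors hrn
  have hT1 := trace_sub_trace_le_specNorm_mul_frobNorm_div hD hV hW hX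
    (hXs.mul_topEigenvectors hrn)
    (hXs.pos_of_lt_rank hmin.1.1 (i := ⟨r - 1, (Nat.sub_lt hr one_pos).trans_le hrn⟩)
      (by rw [hrank]; exact Nat.sub_lt hr one_pos))
    fun j => hXs.1 (Fin.le_def.2 (Nat.le_sub_one_of_lt j.2))
  have hT2 := trace_transpose_mul_mul_le_card_mul_specNorm hW (D - g X)
  have hT3 := trace_transpose_mul_mul_le_frobNorm hW (g X - g Xs)
  have hT4 := hmin.trace_topEigenvectors_eq hr hrn hgrad hG hXs hrank
  have hsplit : (Vᵀ * D * V).trace = ((Vᵀ * D * V).trace - (Wᵀ * D * W).trace)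
      + (Wᵀ * (D - g X) * W).trace + (Wᵀ * (g X - g Xs) * W).trace + (Wᵀ * g Xs * W).trace := by
    simp only [Matrix.mul_sub, Matrix.sub_mul, trace_sub]
    ring
  simp only [Fintype.card_fin] at hT1 hT2 hT3
  rw [frobInner_mul_transpose_of_isSymm hD, hsplit]
  linarith

/-- lower bound on −⟨VVᵀ, ∇̃⟩ near a rank-r optimal solution. -/
theorem stmt12 (n r : ℕ) (hr : 1 ≤ r) (hrn : r ≤ n)
    (β ξ : ℝ)
    (f : Matrix (Fin n) (Fin n) ℝ → ℝ)
    (g : Matrix (Fin n) (Fin n) ℝ → Matrix (Fin n) (Fin n) ℝ)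
    (hgrad : IsGradient f g)
    (hsmooth : ∀ X Y, frobNorm (g X - g Y) ≤ β * frobNorm (X - Y))
    (Xstar : Matrix (Fin n) (Fin n) ℝ)
    (hmin : IsMinimizerOn f (spectrahedron n) Xstar)
    (hrankXs : Xstar.rank = r)
    (mu : Fin n → ℝ) (w : Fin n → Fin n → ℝ)
    (hmu : IsEigenDecomp (g Xstar) mu w)
    (lamX : Fin n → ℝ) (vX : Fin n → Fin n → ℝ)
    (hlamX : IsEigenDecomp Xstar lamX vX)
    (X : Matrix (Fin n) (Fin n) ℝ)
    (V : Matrix (Fin n) (Fin r) ℝ) (horth : Vᵀ * V = 1)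
    (d : Fin r → ℝ) (hXdecomp : X = V * Matrix.diagonal d * Vᵀ)
    (D : Matrix (Fin n) (Fin n) ℝ) (hDsymm : D.IsSymm)
    (hDerr : specNorm (D - g X) ≤ ξ) :
    -((r : ℝ) * mu ⟨n - 1, by omega⟩) - (r : ℝ) * ξ -
        Real.sqrt r * frobNorm (X - Xstar) *
          (Real.sqrt r * β + 2 * Real.sqrt 2 * specNorm D / lamX ⟨r - 1, by omega⟩) ≤
      -frobInner (V * Vᵀ) D := by
  have hbound := frobInner_mul_transpose_le hr hrn hgrad hmin hrankXs hmu hlamX horth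
    (hXdecomp ▸ one_sub_mul_transpose_mul_mul_transpose horth _) hDsymm
  set F := frobNorm (X - Xstar)
  set lamr := lamX ⟨r - 1, by omega⟩
  have hlamr : 0 < lamr :=
    hlamX.pos_of_lt_rank hmin.1.1 (by rw [hrankXs]; exact Nat.sub_lt hr one_pos)
  have hβF : 0 ≤ β * F := (Real.sqrt_nonneg _).trans (hsmooth X Xstar)
  have hsqrt_r : √(r : ℝ) ≤ r := Real.sqrt_le_self_iff.2 (Or.inr (by exact_mod_cast hr))
  have hT1_nonneg : 0 ≤ 2 * specNorm D * √r * (F / lamr) :=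
    mul_nonneg (mul_nonneg (mul_nonneg zero_le_two (specNorm_nonneg D)) (Real.sqrt_nonneg _))
      (div_nonneg (Real.sqrt_nonneg _) hlamr.le)
  have hexpand : √r * F * (√r * β + 2 * √2 * specNorm D / lamr)
      = (√r * √r) * (β * F) + √2 * (2 * specNorm D * √r * (F / lamr)) := by
    ring
  rw [hexpand, Real.mul_self_sqrt (Nat.cast_nonneg _)]
  linarith [mul_le_mul_of_nonneg_left (hsmooth X Xstar) (Real.sqrt_nonneg r),
    mul_le_mul_of_nonneg_left hDerr (Nat.cast_nonneg r), mul_le_mul_of_nonneg_right hsqrt_r hβF,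
    le_mul_of_one_le_left hT1_nonneg (Real.one_le_sqrt.2 one_le_two)]

end LRSGD
end
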